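/- Let F be a real d_Y × d_Θ matrix, f, y ∈ ℝ^{d_Y} and σ > 0. Suppose θ, η, v_θ, v_η, λ are differentiable curves satisfying the constrained linear-Gaussian Hamiltonian dynamics: θ'(t) = v_θ(t), η'(t) = v_η(t), v_θ'(t) = −θ(t) − Fᵀλ(t), v_η'(t) = −η(t) − σλ(t), with constraints Fθ(t) + f + ση(t) − y = 0 and Fv_θ(t) + σv_η(t) = 0 for all t. Then the Lagrange multiplier is constant in time and given explicitly by λ(t) = −(σ²I + FFᵀ)⁻¹(Fθ(t) + ση(t)) = −(σ²I + FFᵀ)⁻¹(y − f) for all t (the matrix σ²I + FFᵀ is positive definite, hence invertible, since σ > 0). -/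

import Mathlib

open Matrix

/-!
Differentiating the momentum constraint `F v_θ + σ v_η = 0` and substituting the equations of
motion for `v_θ'` and `v_η'` gives the hidden constraint
`(σ²I + FFᵀ) λ + (Fθ + ση) = 0`. Since `σ²I + FFᵀ` is positive definite this determines `λ`,
and the position constraint turns `Fθ + ση` into the constant `y - f`.
-/

theorem Matrix.posDef_smul_one_add_mul_transpose {m n : Type*} [Fintype m] [Fintype n]
    [DecidableEq m] (F : Matrix m n ℝ) {c : ℝ} (hc : 0 < c) :
    (c • (1 : Matrix m m ℝ) + F * Fᵀ).PosDef :=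
  (PosDef.one.smul hc).add_posSemidef (by simpa using posSemidef_self_mul_conjTranspose F)

theorem Matrix.eq_neg_inv_mulVec_of_mulVec_add_eq_zero {m K : Type*} [Fintype m]
    [DecidableEq m] [Field K]
    {M : Matrix m m K} (hM : IsUnit M) {l v : m → K} (h : M *ᵥ l + v = 0) :
    l = -(M⁻¹ *ᵥ v) := by
  rw [eq_neg_of_add_eq_zero_right h, mulVec_neg, neg_neg, mulVec_mulVec,
    nonsing_inv_mul M ((isUnit_iff_isUnit_det M).mp hM), one_mulVec]

theorem HasDerivAt.mulVec {m n : Type*} [Fintype m] [Fintype n] {u : ℝ → n → ℝ} {u' : n → ℝ}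
    {t : ℝ} (A : Matrix m n ℝ)
    (hu : HasDerivAt u u' t) : HasDerivAt (fun s => A *ᵥ u s) (A *ᵥ u') t := by
  simpa [Function.comp_def] using
    (mulVecLin A).toContinuousLinearMap.hasFDerivAt.comp_hasDerivAt t hu

theorem HasDerivAt.eq_zero_of_forall_eq_zero {E : Type*} [NormedAddCommGroup E]
    [NormedSpace ℝ E] {g : ℝ → E} {g' : E} {t : ℝ} (hg : ∀ s, g s = 0)
    (h : HasDerivAt g g' t) : g' = 0 := by
  obtain rfl : g = fun _ => 0 := funext hg
  exact h.unique (hasDerivAt_const t 0)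

theorem hasDerivAt_mulVec_add_smul_of_constrained_dynamics {m n : Type*} [Fintype m]
    [Fintype n] [DecidableEq m] (F : Matrix m n ℝ) (σ : ℝ)
    {vθ : ℝ → n → ℝ} {vη : ℝ → m → ℝ} {a : n → ℝ} {b l : m → ℝ} {t : ℝ}
    (hvθ : HasDerivAt vθ (-a - Fᵀ *ᵥ l) t) (hvη : HasDerivAt vη (-b - σ • l) t) :
    HasDerivAt (fun s => F *ᵥ vθ s + σ • vη s)
      (-((σ ^ 2 • (1 : Matrix m m ℝ) + F * Fᵀ) *ᵥ l + (F *ᵥ a + σ • b))) t := by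
  refine ((hvθ.mulVec F).add (hvη.const_smul σ)).congr_deriv ?_
  simp only [add_mulVec, smul_mulVec, one_mulVec, mulVec_sub, mulVec_neg, mulVec_mulVec,
    smul_sub, smul_neg, smul_smul, sq]
  abel

theorem stmt1_general (dΘ dY : ℕ)
    (F : Matrix (Fin dY) (Fin dΘ) ℝ) (f y : Fin dY → ℝ) (σ : ℝ) (hσ : 0 < σ)
    (θ : ℝ → Fin dΘ → ℝ) (η : ℝ → Fin dY → ℝ)
    (vθ : ℝ → Fin dΘ → ℝ) (vη : ℝ → Fin dY → ℝ) (lam : ℝ → Fin dY → ℝ)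
    (hvθ : ∀ t : ℝ, HasDerivAt vθ (-(θ t) - Fᵀ *ᵥ lam t) t)
    (hvη : ∀ t : ℝ, HasDerivAt vη (-(η t) - σ • lam t) t)
    (hpos : ∀ t : ℝ, F *ᵥ θ t + f + σ • η t - y = 0)
    (hmom : ∀ t : ℝ, F *ᵥ vθ t + σ • vη t = 0) :
    ∀ t : ℝ,
      lam t = -((σ ^ 2 • (1 : Matrix (Fin dY) (Fin dY) ℝ) + F * Fᵀ)⁻¹ *ᵥ
          (F *ᵥ θ t + σ • η t)) ∧
      lam t = -((σ ^ 2 • (1 : Matrix (Fin dY) (Fin dY) ℝ) + F * Fᵀ)⁻¹ *ᵥ (y - f)) := by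
  intro t
  set M := σ ^ 2 • (1 : Matrix (Fin dY) (Fin dY) ℝ) + F * Fᵀ
  have hM : IsUnit M := (posDef_smul_one_add_mul_transpose F (by positivity)).isUnit
  have hidden : M *ᵥ lam t + (F *ᵥ θ t + σ • η t) = 0 := neg_eq_zero.mp <|
    HasDerivAt.eq_zero_of_forall_eq_zero hmom <|
      hasDerivAt_mulVec_add_smul_of_constrained_dynamics F σ (hvθ t) (hvη t)
  have hlam := eq_neg_inv_mulVec_of_mulVec_add_eq_zero hM hidden
  have hdata : F *ᵥ θ t + σ • η t = y - f := by
    rw [← sub_eq_zero, ← hpos t]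
    abel
  exact ⟨hlam, hdata ▸ hlam⟩

/-- The Lagrange multiplier in the constrained linear-Gaussian Hamiltonian dynamics is
constant in time and given explicitly by
`λ(t) = −(σ²I + FFᵀ)⁻¹(Fθ(t) + ση(t)) = −(σ²I + FFᵀ)⁻¹(y − f)`. -/
theorem stmt1 (dΘ dY : ℕ)
    (F : Matrix (Fin dY) (Fin dΘ) ℝ) (f y : Fin dY → ℝ) (σ : ℝ) (hσ : 0 < σ)
    (θ : ℝ → Fin dΘ → ℝ) (η : ℝ → Fin dY → ℝ)
    (vθ : ℝ → Fin dΘ → ℝ) (vη : ℝ → Fin dY → ℝ) (lam : ℝ → Fin dY → ℝ)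
    (hθ : ∀ t : ℝ, HasDerivAt θ (vθ t) t)
    (hη : ∀ t : ℝ, HasDerivAt η (vη t) t)
    (hvθ : ∀ t : ℝ, HasDerivAt vθ (-(θ t) - Fᵀ *ᵥ lam t) t)
    (hvη : ∀ t : ℝ, HasDerivAt vη (-(η t) - σ • lam t) t)
    (hpos : ∀ t : ℝ, F *ᵥ θ t + f + σ • η t - y = 0)
    (hmom : ∀ t : ℝ, F *ᵥ vθ t + σ • vη t = 0) :
    ∀ t : ℝ,
      lam t = -((σ ^ 2 • (1 : Matrix (Fin dY) (Fin dY) ℝ) + F * Fᵀ)⁻¹ *ᵥ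
          (F *ᵥ θ t + σ • η t)) ∧
      lam t = -((σ ^ 2 • (1 : Matrix (Fin dY) (Fin dY) ℝ) + F * Fᵀ)⁻¹ *ᵥ (y - f)) :=
  stmt1_general dΘ dY F f y σ hσ θ η vθ vη lam hvθ hvη hpos hmom
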